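/- Let x be s-sparse, ‖y - Ax‖₂ ≤ ε, and let x̃ ∈ ℝ^N be arbitrary with T̂ = supp(x̃, s) its s largest-magnitude indices. Define x̂ by x̂_{T̂} = A_{T̂}† y, x̂_{T̂^c} = 0. If δ_{2s} < 1, then ‖x - x̂‖₂ ≤ √(2/(1-δ_{2s}²)) ‖x - x̃‖₂ + (√(1+δ_s)/(1-δ_{2s})) ε. -/

import Mathlib

open Finset

/-- ℓ2 norm of a vector. -/
noncomputable def l2 {n : ℕ} (v : Fin n → ℝ) : ℝ := Real.sqrt (∑ i, v i ^ 2)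

/-- ℓ1 norm of a vector. -/
noncomputable def l1 {n : ℕ} (v : Fin n → ℝ) : ℝ := ∑ i, |v i|

/-- number of nonzero entries (ℓ0 "norm"). -/
noncomputable def spars {n : ℕ} (v : Fin n → ℝ) : ℕ := Set.ncard {i | v i ≠ 0}

/-- restriction of a vector to an index set (zero off the set). -/
def restr {n : ℕ} (S : Finset (Fin n)) (v : Fin n → ℝ) : Fin n → ℝ :=
  fun i => if i ∈ S then v i else 0

/-!
Put `u = x - x̂`. It is supported on `supp x ∪ T̂`, a set of size at most `2s`, and agrees with `x`
off `T̂`. The normal equations make `A u_{T̂}` orthogonal to `A x̂ - y`, so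
`⟨A u_{T̂}, A u⟩ = ⟨A u_{T̂}, A x - y⟩`; together with the RIP estimate
`|⟨A v, A w⟩ - ⟨v, w⟩| ≤ δ_{2s} ‖v‖ ‖w‖` this gives `‖u_{T̂}‖ ≤ δ_{2s} ‖u‖ + √(1 + δ_s) ε`.
As `‖u‖² = ‖u_{T̂}‖² + ‖x_{T̂ᶜ}‖²`, solving this quadratic inequality in `‖u‖` yields
`‖u‖ ≤ ‖x_{T̂ᶜ}‖ / √(1 - δ_{2s}²) + √(1 + δ_s) ε / (1 - δ_{2s})`.
Finally `x_{T̂ᶜ}` lives on `supp x \ T̂`, which is no larger than `T̂ \ supp x`, where `x̃` is at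
least as large and `x` vanishes; hence `‖x_{T̂ᶜ}‖ ≤ √2 ‖x - x̃‖`.
-/

open Matrix

lemma le_sqrt_mul_of_sq_le_mul_sq {a b c : ℝ} (ha : 0 ≤ a) (hb : 0 ≤ b) (h : a ^ 2 ≤ c * b ^ 2) :
    a ≤ √c * b := by
  rw [← Real.sqrt_sq ha, ← Real.sqrt_sq hb, ← Real.sqrt_mul' _ (sq_nonneg b)]
  exact Real.sqrt_le_sqrt h

lemma sum_le_sum_of_card_le_of_forall_le {ι R : Type*} [AddCommMonoid R] [LinearOrder R]
    [IsOrderedAddMonoid R] {U V : Finset ι} {f : ι → R} (hcard : U.card ≤ V.card)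
    (hle : ∀ i ∈ U, ∀ j ∈ V, f i ≤ f j) (hf : ∀ j ∈ V, 0 ≤ f j) :
    ∑ i ∈ U, f i ≤ ∑ j ∈ V, f j := by
  rcases V.eq_empty_or_nonempty with rfl | hV
  · simp_all
  obtain ⟨j₀, hj₀, hmin⟩ := V.exists_min_image f hV
  calc ∑ i ∈ U, f i ≤ U.card • f j₀ := sum_le_card_nsmul _ _ _ fun i hi => hle i hi j₀ hj₀
    _ ≤ V.card • f j₀ := nsmul_le_nsmul_left (hf j₀ hj₀) hcard
    _ ≤ ∑ j ∈ V, f j := card_nsmul_le_sum _ _ _ hmin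

lemma le_div_sqrt_add_div_of_sq_le {δ a b t : ℝ} (hδ₀ : 0 ≤ δ) (hδ₁ : δ < 1) (ha : 0 ≤ a)
    (hb : 0 ≤ b) (h : t ^ 2 ≤ (δ * t + b) ^ 2 + a ^ 2) :
    t ≤ a / √(1 - δ ^ 2) + b / (1 - δ) := by
  have hq₀ : 0 < 1 - δ ^ 2 := by nlinarith
  set q := √(1 - δ ^ 2)
  have hq : 0 < q := Real.sqrt_pos.2 hq₀
  have hq2 : q ^ 2 = 1 - δ ^ 2 := Real.sq_sqrt hq₀.le
  -- completing the square in `t`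
  have hsq : ((1 - δ ^ 2) * t - δ * b) ^ 2 ≤ (b + q * a) ^ 2 := by
    nlinarith [mul_nonneg hb (mul_nonneg hq.le ha)]
  have hlin := (abs_le_of_sq_le_sq' hsq (by positivity)).2
  rw [div_add_div _ _ hq.ne' (by linarith), le_div_iff₀ (mul_pos hq (by linarith))]
  nlinarith [mul_le_mul_of_nonneg_left hlin hq.le]

section l2

variable {n : ℕ}

lemma l2_eq_sqrt_dotProduct (v : Fin n → ℝ) : l2 v = √(v ⬝ᵥ v) := by
  simp [l2, dotProduct, sq]

lemma l2_nonneg (v : Fin n → ℝ) : 0 ≤ l2 v := Real.sqrt_nonneg _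

lemma l2_sq (v : Fin n → ℝ) : l2 v ^ 2 = v ⬝ᵥ v := by
  rw [l2_eq_sqrt_dotProduct, Real.sq_sqrt (by simpa using dotProduct_self_star_nonneg v)]

lemma l2_pos {v : Fin n → ℝ} (hv : v ≠ 0) : 0 < l2 v := by
  rw [l2_eq_sqrt_dotProduct, Real.sqrt_pos]
  exact (by simpa using dotProduct_self_star_nonneg v : (0:ℝ) ≤ v ⬝ᵥ v).lt_of_ne'
    (dotProduct_self_eq_zero.not.2 hv)

lemma l2_zero : l2 (0 : Fin n → ℝ) = 0 := by simp [l2]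

lemma l2_sub_comm (v w : Fin n → ℝ) : l2 (v - w) = l2 (w - v) := by
  simp only [l2, Pi.sub_apply]
  congr 1
  exact sum_congr rfl fun i _ => by ring

lemma l2_smul {c : ℝ} (hc : 0 ≤ c) (v : Fin n → ℝ) : l2 (c • v) = c * l2 v := by
  rw [l2_eq_sqrt_dotProduct, l2_eq_sqrt_dotProduct, smul_dotProduct, dotProduct_smul, smul_eq_mul,
    smul_eq_mul, ← mul_assoc, Real.sqrt_mul (mul_self_nonneg c), Real.sqrt_mul_self hc]

lemma dotProduct_le_l2_mul_l2 (v w : Fin n → ℝ) : v ⬝ᵥ w ≤ l2 v * l2 w :=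
  Real.sum_mul_le_sqrt_mul_sqrt _ v w

lemma l2_restr_sq (T : Finset (Fin n)) (v : Fin n → ℝ) : l2 (restr T v) ^ 2 = ∑ i ∈ T, v i ^ 2 := by
  rw [l2, Real.sq_sqrt (by positivity), ← Fintype.sum_ite_mem]
  simp [restr, ite_pow]

lemma l2_sq_eq_restr_add_restr_compl (T : Finset (Fin n)) (v : Fin n → ℝ) :
    l2 v ^ 2 = l2 (restr T v) ^ 2 + l2 (restr Tᶜ v) ^ 2 := by
  rw [l2_restr_sq, l2_restr_sq, sum_add_sum_compl, l2, Real.sq_sqrt (by positivity)]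

lemma restr_dotProduct_self (T : Finset (Fin n)) (v : Fin n → ℝ) :
    restr T v ⬝ᵥ v = l2 (restr T v) ^ 2 := by
  rw [l2_restr_sq, ← Fintype.sum_ite_mem]
  simp [dotProduct, restr, ite_mul, sq]

end l2

lemma spars_le_card {n : ℕ} {v : Fin n → ℝ} {T : Finset (Fin n)} (hv : ∀ i ∉ T, v i = 0) :
    spars v ≤ T.card := by
  rw [spars, ← Set.ncard_coe_finset]
  exact Set.ncard_le_ncard (fun i hi => by_contra fun h => hi (hv i h))

lemma spars_eq_card_filter {n : ℕ} (v : Fin n → ℝ) :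
    spars v = (univ.filter (v · ≠ 0)).card := by
  rw [spars, ← Set.ncard_coe_finset]
  simp

-- `δ` is an upper bound for the restricted isometry constant `δ_k` of `A`.
def SatisfiesRIP {M N : ℕ} (A : Matrix (Fin M) (Fin N) ℝ) (k : ℕ) (δ : ℝ) : Prop :=
  ∀ v : Fin N → ℝ, spars v ≤ k →
    (1 - δ) * l2 v ^ 2 ≤ l2 (A *ᵥ v) ^ 2 ∧ l2 (A *ᵥ v) ^ 2 ≤ (1 + δ) * l2 v ^ 2

namespace SatisfiesRIP

variable {M N k : ℕ} {A : Matrix (Fin M) (Fin N) ℝ} {δ : ℝ}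

lemma nonneg (hA : SatisfiesRIP A k δ) {v : Fin N → ℝ} (hv : spars v ≤ k) (hv0 : v ≠ 0) :
    0 ≤ δ := by
  obtain ⟨hlow, hup⟩ := hA v hv
  nlinarith [pow_pos (l2_pos hv0) 2]

lemma l2_mulVec_le (hA : SatisfiesRIP A k δ) {v : Fin N → ℝ} (hv : spars v ≤ k) :
    l2 (A *ᵥ v) ≤ √(1 + δ) * l2 v :=
  le_sqrt_mul_of_sq_le_mul_sq (l2_nonneg _) (l2_nonneg v) (hA v hv).2

variable {T : Finset (Fin N)} {v w : Fin N → ℝ}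

lemma abs_dotProduct_mulVec_sub_le_half (hA : SatisfiesRIP A k δ) (hT : T.card ≤ k)
    (hv : ∀ i ∉ T, v i = 0) (hw : ∀ i ∉ T, w i = 0) :
    |(A *ᵥ v) ⬝ᵥ (A *ᵥ w) - v ⬝ᵥ w| ≤ δ * (l2 v ^ 2 + l2 w ^ 2) / 2 := by
  have hadd : spars (v + w) ≤ k := (spars_le_card fun i hi => by simp [hv i hi, hw i hi]).trans hT
  have hsub : spars (v - w) ≤ k := (spars_le_card fun i hi => by simp [hv i hi, hw i hi]).trans hT
  obtain ⟨hadd_low, hadd_up⟩ := hA _ hadd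
  obtain ⟨hsub_low, hsub_up⟩ := hA _ hsub
  simp only [l2_sq, mulVec_add, mulVec_sub, add_dotProduct, dotProduct_add, sub_dotProduct,
    dotProduct_sub, dotProduct_comm w v, dotProduct_comm (A *ᵥ w) (A *ᵥ v)] at *
  rw [abs_le]
  constructor <;> nlinarith

lemma abs_dotProduct_mulVec_sub_le (hA : SatisfiesRIP A k δ) (hT : T.card ≤ k)
    (hv : ∀ i ∉ T, v i = 0) (hw : ∀ i ∉ T, w i = 0) :
    |(A *ᵥ v) ⬝ᵥ (A *ᵥ w) - v ⬝ᵥ w| ≤ δ * l2 v * l2 w := by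
  rcases eq_or_ne v 0 with rfl | hv0
  · simp [l2_zero]
  rcases eq_or_ne w 0 with rfl | hw0
  · simp [l2_zero]
  have hvw : 0 < l2 v * l2 w := mul_pos (l2_pos hv0) (l2_pos hw0)
  -- AM-GM by rescaling: `l2 w • v` and `l2 v • w` have the same norm
  have h := hA.abs_dotProduct_mulVec_sub_le_half hT (v := l2 w • v) (w := l2 v • w)
    (fun i hi => by simp [hv i hi]) (fun i hi => by simp [hw i hi])
  rw [mulVec_smul, mulVec_smul, smul_dotProduct, dotProduct_smul, smul_dotProduct, dotProduct_smul,
    l2_smul (l2_nonneg w), l2_smul (l2_nonneg v), smul_eq_mul, smul_eq_mul, smul_eq_mul,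
    smul_eq_mul, ← mul_sub, ← mul_sub, ← mul_assoc, abs_mul, abs_of_pos (by nlinarith)] at h
  refine le_of_mul_le_mul_left ?_ hvw
  nlinarith

end SatisfiesRIP

lemma mulVec_dotProduct_eq_zero_of_normal_eq {M N : ℕ} (A : Matrix (Fin M) (Fin N) ℝ)
    {T : Finset (Fin N)} {r : Fin M → ℝ} (hr : ∀ i ∈ T, ∑ j, A j i * r j = 0) {v : Fin N → ℝ}
    (hv : ∀ i ∉ T, v i = 0) : (A *ᵥ v) ⬝ᵥ r = 0 := by
  rw [dotProduct_comm, dotProduct_mulVec]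
  refine sum_eq_zero fun i _ => ?_
  by_cases hi : i ∈ T
  · simp [vecMul, dotProduct, mul_comm (r _), hr i hi]
  · simp [hv i hi]

lemma l2_restr_compl_le {N : ℕ} {x xt : Fin N → ℝ} {T : Finset (Fin N)} (hx : spars x ≤ T.card)
    (hT : ∀ i ∈ T, ∀ j ∉ T, |xt j| ≤ |xt i|) : l2 (restr Tᶜ x) ≤ √2 * l2 (x - xt) := by
  set S := univ.filter (x · ≠ 0)
  have hx0 : ∀ i ∉ S, x i = 0 := by simp [S]
  have hST : (S \ T).card ≤ (T \ S).card := by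
    rw [card_sdiff_le_card_sdiff_iff, ← spars_eq_card_filter]
    exact hx
  -- on `S \ T` the entries of `xt` are dominated by those on `T \ S`, where `x` vanishes
  have hxt : ∑ i ∈ S \ T, xt i ^ 2 ≤ ∑ j ∈ T \ S, (x j - xt j) ^ 2 :=
    calc ∑ i ∈ S \ T, xt i ^ 2 ≤ ∑ j ∈ T \ S, xt j ^ 2 :=
          sum_le_sum_of_card_le_of_forall_le hST
            (fun i hi j hj => sq_le_sq.2 (hT j (mem_sdiff.1 hj).1 i (mem_sdiff.1 hi).2))
            (fun _ _ => sq_nonneg _)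
      _ = ∑ j ∈ T \ S, (x j - xt j) ^ 2 :=
          sum_congr rfl fun j hj => by simp [hx0 j (mem_sdiff.1 hj).2]
  refine le_sqrt_mul_of_sq_le_mul_sq (l2_nonneg _) (l2_nonneg _) ?_
  calc l2 (restr Tᶜ x) ^ 2 = ∑ i ∈ S \ T, x i ^ 2 := by
        rw [l2_restr_sq]
        refine (sum_subset (fun i hi => ?_) fun i hiT hi => ?_).symm
        · simpa using (mem_sdiff.1 hi).2
        · simp [hx0 i fun hS => hi (mem_sdiff.2 ⟨hS, mem_compl.1 hiT⟩)]
    _ ≤ ∑ i ∈ S \ T, (2 * (x i - xt i) ^ 2 + 2 * xt i ^ 2) :=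
        sum_le_sum fun i _ => by nlinarith [sq_nonneg (x i - 2 * xt i)]
    _ ≤ 2 * ∑ i ∈ S \ T ∪ T \ S, (x i - xt i) ^ 2 := by
        rw [sum_add_distrib, ← mul_sum, ← mul_sum, sum_union disjoint_sdiff_sdiff]
        linarith
    _ ≤ 2 * l2 (x - xt) ^ 2 := by
        rw [l2, Real.sq_sqrt (by positivity)]
        gcongr
        exact sum_le_univ_sum_of_nonneg fun _ => sq_nonneg _

lemma SatisfiesRIP.l2_restr_le {M N k k' : ℕ} {A : Matrix (Fin M) (Fin N) ℝ} {δ δ' : ℝ}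
    (hA : SatisfiesRIP A k δ) (hA' : SatisfiesRIP A k' δ') (hδ : 0 ≤ δ) {S T : Finset (Fin N)}
    (hS : S.card ≤ k) (hT : T.card ≤ k') (hTS : T ⊆ S) {u : Fin N → ℝ} (hu : ∀ i ∉ S, u i = 0)
    {e : Fin M → ℝ} (he : (A *ᵥ restr T u) ⬝ᵥ (A *ᵥ u) = (A *ᵥ restr T u) ⬝ᵥ e) :
    l2 (restr T u) ≤ δ * l2 u + √(1 + δ') * l2 e := by
  set w := restr T u
  have hwT : ∀ i ∉ T, w i = 0 := fun i hi => if_neg hi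
  have hwS : ∀ i ∉ S, w i = 0 := fun i hi => hwT i fun h => hi (hTS h)
  have hR : 0 ≤ δ * l2 u + √(1 + δ') * l2 e :=
    add_nonneg (mul_nonneg hδ (l2_nonneg u)) (mul_nonneg (Real.sqrt_nonneg _) (l2_nonneg e))
  have key : l2 w ^ 2 ≤ l2 w * (δ * l2 u + √(1 + δ') * l2 e) :=
    calc l2 w ^ 2 = w ⬝ᵥ u := (restr_dotProduct_self T u).symm
      _ ≤ (A *ᵥ w) ⬝ᵥ (A *ᵥ u) + δ * l2 w * l2 u := by
          linarith [(abs_le.1 (hA.abs_dotProduct_mulVec_sub_le hS hwS hu)).1]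
      _ ≤ l2 (A *ᵥ w) * l2 e + δ * l2 w * l2 u := by
          rw [he]; gcongr; exact dotProduct_le_l2_mul_l2 _ _
      _ ≤ √(1 + δ') * l2 w * l2 e + δ * l2 w * l2 u := by
          have hAw := hA'.l2_mulVec_le ((spars_le_card hwT).trans hT)
          exact add_le_add_left (mul_le_mul_of_nonneg_right hAw (l2_nonneg e)) _
      _ = l2 w * (δ * l2 u + √(1 + δ') * l2 e) := by ring
  nlinarith [l2_nonneg w]

theorem l2_sub_le_of_normal_eq {M N s₁ s₂ : ℕ} {A : Matrix (Fin M) (Fin N) ℝ} {δ δ' ε : ℝ}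
    (hA : SatisfiesRIP A (s₁ + s₂) δ) (hA' : SatisfiesRIP A s₂ δ') (hδ : δ < 1)
    {x : Fin N → ℝ} (hx : spars x ≤ s₁) {y : Fin M → ℝ} (hy : l2 (y - A *ᵥ x) ≤ ε)
    {T : Finset (Fin N)} (hT : T.card ≤ s₂) {xh : Fin N → ℝ} (hxh : ∀ i ∉ T, xh i = 0)
    (hls : ∀ i ∈ T, ∑ j, A j i * (A *ᵥ xh - y) j = 0) :
    l2 (x - xh) ≤ l2 (restr Tᶜ x) / √(1 - δ ^ 2) + √(1 + δ') / (1 - δ) * ε := by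
  set S := univ.filter (x · ≠ 0) ∪ T
  have hS : S.card ≤ s₁ + s₂ :=
    (card_union_le _ _).trans (add_le_add ((spars_eq_card_filter x).ge.trans hx) hT)
  have hu : ∀ i ∉ S, (x - xh) i = 0 := fun i hi => by simp_all [S]
  have hε : 0 ≤ ε := (l2_nonneg _).trans hy
  rcases eq_or_ne (x - xh) 0 with h0 | h0
  · rw [h0, l2_zero]
    exact add_nonneg (div_nonneg (l2_nonneg _) (Real.sqrt_nonneg _))
      (mul_nonneg (div_nonneg (Real.sqrt_nonneg _) (by linarith)) hε)
  have hδ₀ : 0 ≤ δ := hA.nonneg ((spars_le_card hu).trans hS) h0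
  have hnormal : (A *ᵥ restr T (x - xh)) ⬝ᵥ (A *ᵥ (x - xh))
      = (A *ᵥ restr T (x - xh)) ⬝ᵥ (A *ᵥ x - y) := by
    have hres : A *ᵥ (x - xh) = (A *ᵥ x - y) - (A *ᵥ xh - y) := by rw [mulVec_sub]; abel
    have hzero := mulVec_dotProduct_eq_zero_of_normal_eq A hls (v := restr T (x - xh))
      fun i hi => if_neg hi
    rw [hres, dotProduct_sub, hzero, sub_zero]
  have hw := hA.l2_restr_le hA' hδ₀ hS hT subset_union_right hu hnormal
  rw [l2_sub_comm (A *ᵥ x)] at hw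
  have hcompl : restr Tᶜ (x - xh) = restr Tᶜ x :=
    funext fun i => by by_cases hi : i ∈ T <;> simp [restr, hi, hxh]
  have hquad : l2 (x - xh) ^ 2
      ≤ (δ * l2 (x - xh) + √(1 + δ') * ε) ^ 2 + l2 (restr Tᶜ x) ^ 2 := by
    rw [l2_sq_eq_restr_add_restr_compl T, hcompl]
    exact add_le_add_left (pow_le_pow_left₀ (l2_nonneg _) (hw.trans (by gcongr)) 2) _
  calc l2 (x - xh) ≤ l2 (restr Tᶜ x) / √(1 - δ ^ 2) + √(1 + δ') * ε / (1 - δ) :=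
        le_div_sqrt_add_div_of_sq_le hδ₀ hδ (l2_nonneg _) (mul_nonneg (Real.sqrt_nonneg _) hε) hquad
    _ = l2 (restr Tᶜ x) / √(1 - δ ^ 2) + √(1 + δ') / (1 - δ) * ε := by ring

theorem stmt15 {M N : ℕ} (A : Matrix (Fin M) (Fin N) ℝ)
    (s : ℕ) (x : Fin N → ℝ) (hx : spars x ≤ s)
    (y : Fin M → ℝ) (ε : ℝ) (hy : l2 (y - A.mulVec x) ≤ ε)
    (xt : Fin N → ℝ)
    (Th : Finset (Fin N)) (hThcard : Th.card = s)
    (hTh : ∀ i ∈ Th, ∀ j ∉ Th, |xt j| ≤ |xt i|)   -- T̂ = indices of the s largest magnitudes of x̃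
    (xh : Fin N → ℝ)
    -- x̂ is supported on T̂ and x̂_{T̂} = A_{T̂}† y, characterized by the normal equations
    (hxhsupp : ∀ i ∉ Th, xh i = 0)
    (hxhls : ∀ i ∈ Th, ∑ j, A j i * (A.mulVec xh j - y j) = 0)
    (δ2s δs : ℝ) (hδ2s : δ2s < 1)
    (hRIP2s : ∀ v : Fin N → ℝ, spars v ≤ 2 * s →
      (1 - δ2s) * (l2 v) ^ 2 ≤ (l2 (A.mulVec v)) ^ 2 ∧
      (l2 (A.mulVec v)) ^ 2 ≤ (1 + δ2s) * (l2 v) ^ 2)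
    (hRIPs : ∀ v : Fin N → ℝ, spars v ≤ s →
      (1 - δs) * (l2 v) ^ 2 ≤ (l2 (A.mulVec v)) ^ 2 ∧
      (l2 (A.mulVec v)) ^ 2 ≤ (1 + δs) * (l2 v) ^ 2) :
    l2 (x - xh) ≤ Real.sqrt (2 / (1 - δ2s ^ 2)) * l2 (x - xt) + (Real.sqrt (1 + δs) / (1 - δ2s)) * ε := by
  have hRIP : SatisfiesRIP A (s + s) δ2s := by rw [← two_mul]; exact hRIP2s
  calc l2 (x - xh)
      ≤ l2 (restr Thᶜ x) / √(1 - δ2s ^ 2) + √(1 + δs) / (1 - δ2s) * ε :=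
        l2_sub_le_of_normal_eq hRIP hRIPs hδ2s hx hy hThcard.le hxhsupp hxhls
    _ ≤ √2 * l2 (x - xt) / √(1 - δ2s ^ 2) + √(1 + δs) / (1 - δ2s) * ε := by
        gcongr
        exact l2_restr_compl_le (hx.trans hThcard.ge) hTh
    _ = √(2 / (1 - δ2s ^ 2)) * l2 (x - xt) + √(1 + δs) / (1 - δ2s) * ε := by
        rw [Real.sqrt_div zero_le_two]; ring
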